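/- There exists an upper triangular r×r complex matrix S with diagonal entries κ_{n-r}², κ_{n-r+1}², ..., κ_{n-1}² such that for all z: E(z) x(z) = −2πi · S · t(z), where x(z) = (π_n(z), −2πi κ_{n-1}² π_{n-1}(z))^t and t(z) = (π_{n-r}(z), ..., π_{n-1}(z))^t. In particular S is invertible. -/

import Mathlib

/-!
With `j = r - 1 - i`, row `i` of `E(z) x(z)` is `−2πi κ_{n-1}² F_j(z)`, where
`F_j = P_n^j π_{n-1} - (Q_n^j / (−2πi κ_{n-1}²)) π_n` and `P_n^j = π_n /ₘ X^(n-j)`. The leading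
parts of the two products cancel, so `deg F_j < n` and `F_j = ∑_{m<n} κ_m² ⟨F_j, π_m⟩ π_m`.
Moving the truncations onto `π_m`, `⟨F_j, π_m⟩ = ⟨π_{n-1}, P_n^j π_m⟩ - ⟨π_n, (π_{n-1} /ₘ X^(n-j)) π_m⟩`;
for `m ≤ n - 1 - j` the second pairing vanishes by degree, and so does the first unless
`m = n - 1 - j`, when `P_n^j π_m` is monic of degree `n - 1` and the pairing is `κ_{n-1}⁻²`.
Hence the coefficient matrix is upper triangular with diagonal `κ_{n-r+i}² / κ_{n-1}²`.
-/

open MeasureTheory Polynomial Matrix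

noncomputable section

/-- The coefficient `b_j` of `z^{n-j}` in `π_n`. -/
def bcoef (n : ℕ) (p : ℕ → Polynomial ℝ) (j : ℕ) : ℂ :=
  if j ≤ n then (((p n).coeff (n - j) : ℝ) : ℂ) else 0

/-- The coefficient `c_j` of `z^{n-j}` in `−2πi κ_{n-1}² π_{n-1}`. -/
def ccoef (n : ℕ) (p : ℕ → Polynomial ℝ) (κ : ℕ → ℝ) (j : ℕ) : ℂ :=
  if j ≤ n then
    -(2 * Real.pi * Complex.I) * ((κ (n - 1) : ℝ) : ℂ) ^ 2 * (((p (n - 1)).coeff (n - j) : ℝ) : ℂ)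
  else 0

/-- The truncation `b_0 z^j + b_1 z^{j-1} + ⋯ + b_j` of a coefficient sequence. -/
def Ptrunc (b : ℕ → ℂ) (j : ℕ) (z : ℂ) : ℂ :=
  ∑ m ∈ Finset.range (j + 1), b m * z ^ (j - m)

/-- The `r×2` matrix `E(z)` whose `i`-th row is `(−Q_n^{r-i}(z), P_n^{r-i}(z))`. -/
def Emat (n r : ℕ) (p : ℕ → Polynomial ℝ) (κ : ℕ → ℝ) (z : ℂ) : Matrix (Fin r) (Fin 2) ℂ :=
  Matrix.of fun i : Fin r =>
    ![-(Ptrunc (ccoef n p κ) (r - 1 - (i : ℕ)) z), Ptrunc (bcoef n p) (r - 1 - (i : ℕ)) z]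

/-- The column vector `x(z) = (π_n(z), −2πi κ_{n-1}² π_{n-1}(z))^t`. -/
def xcol (n : ℕ) (p : ℕ → Polynomial ℝ) (κ : ℕ → ℝ) (z : ℂ) : Fin 2 → ℂ :=
  ![Polynomial.aeval z (p n),
    -(2 * Real.pi * Complex.I) * ((κ (n - 1) : ℝ) : ℂ) ^ 2 * Polynomial.aeval z (p (n - 1))]

/-- The vector `t(z) = (π_{n-r}(z), ..., π_{n-1}(z))^t`. -/
def tvecC (n r : ℕ) (p : ℕ → Polynomial ℝ) (z : ℂ) : Fin r → ℂ :=
  fun i => Polynomial.aeval z (p (n - r + (i : ℕ)))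

section Truncation

variable {R : Type*} [CommRing R]

lemma Polynomial.coeff_divByMonic_X_pow (q : R[X]) (k d : ℕ) :
    (q /ₘ X ^ k).coeff d = q.coeff (d + k) := by
  nontriviality R
  have hmod : (q %ₘ X ^ k).coeff (d + k) = 0 :=
    coeff_eq_zero_of_degree_lt <| (degree_modByMonic_lt q (monic_X_pow k)).trans_le <| by
      rw [degree_X_pow]; exact_mod_cast Nat.le_add_left k d
  conv_rhs => rw [← modByMonic_add_div q (X ^ k)]
  rw [coeff_add, hmod, coeff_X_pow_mul, zero_add]

lemma Polynomial.Monic.divByMonic_X_pow {q : R[X]} (hq : q.Monic) {k : ℕ}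
    (hk : k ≤ q.natDegree) : (q /ₘ X ^ k).Monic := by
  nontriviality R
  refine (leadingCoeff_divByMonic_of_monic (monic_X_pow k) ?_).trans hq.leadingCoeff
  rw [degree_X_pow, degree_eq_natDegree hq.ne_zero]
  exact_mod_cast hk

/-- The leading terms cancel: write `f` and `g` as `X ^ k * (· /ₘ X ^ k) + (· %ₘ X ^ k)`. -/
lemma Polynomial.degree_divByMonic_X_pow_mul_sub_lt {f g : R[X]} {n k : ℕ}
    (hf : f.natDegree ≤ n) (hg : g.natDegree ≤ n) (hkn : k ≤ n) :
    (f /ₘ X ^ k * g - g /ₘ X ^ k * f).degree < n := by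
  nontriviality R
  have hcross : f /ₘ X ^ k * g - g /ₘ X ^ k * f
      = f /ₘ X ^ k * (g %ₘ X ^ k) - g /ₘ X ^ k * (f %ₘ X ^ k) := by
    linear_combination (g /ₘ X ^ k) * modByMonic_add_div f (X ^ k)
      - (f /ₘ X ^ k) * modByMonic_add_div g (X ^ k)
  have hbound : ∀ u v : R[X], u.natDegree ≤ n → (u /ₘ X ^ k * (v %ₘ X ^ k)).degree < n := by
    intro u v hu
    by_cases hu0 : u /ₘ X ^ k = 0
    · rw [hu0, zero_mul, degree_zero]
      exact WithBot.bot_lt_coe n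
    calc (u /ₘ X ^ k * (v %ₘ X ^ k)).degree
        ≤ (u /ₘ X ^ k).degree + (v %ₘ X ^ k).degree := degree_mul_le _ _
      _ < ↑(n - k) + ↑k := by
        refine WithBot.add_lt_add_of_le_of_lt (degree_ne_bot.mpr hu0) ?_ ?_
        · refine degree_le_of_natDegree_le ?_
          rw [natDegree_divByMonic _ (monic_X_pow k), natDegree_X_pow]
          omega
        · simpa using degree_modByMonic_lt v (monic_X_pow k)
      _ = n := by norm_cast; omega
  rw [hcross]
  exact (degree_sub_le _ _).trans_lt (max_lt (hbound f g hf) (hbound g f hg))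

end Truncation

/-- `P_n^j π_{n-1} - (Q_n^j / (−2πi κ_{n-1}²)) π_n`. -/
def truncCross {R : Type*} [CommRing R] (p : ℕ → R[X]) (n j : ℕ) : R[X] :=
  p n /ₘ X ^ (n - j) * p (n - 1) - p (n - 1) /ₘ X ^ (n - j) * p n

section Orthogonal

variable {K : Type*} [Field K]

structure IsMonicOrthogonal (L : K[X] →ₗ[K] K) (p : ℕ → K[X]) : Prop where
  monic : ∀ k, (p k).Monic
  natDegree_eq : ∀ k, (p k).natDegree = k
  orthogonal : ∀ k m, k ≠ m → L (p k * p m) = 0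

namespace IsMonicOrthogonal

variable {L : K[X] →ₗ[K] K} {p : ℕ → K[X]}

lemma mem_span_image_Iio (hp : IsMonicOrthogonal L p) {q : K[X]} {N : ℕ} (hq : q.degree < N) :
    q ∈ Submodule.span K (p '' Set.Iio N) := by
  let S : Sequence K :=
    ⟨p, fun k => by rw [degree_eq_natDegree (hp.monic k).ne_zero, hp.natDegree_eq]⟩
  have hspan := S.span_degreeLT (m := N) fun k _ => by
    rw [show S k = p k from rfl, (hp.monic k).leadingCoeff]
    exact isUnit_one
  exact hspan ▸ mem_degreeLT.mpr hq

lemma map_mul_eq_zero_of_degree_lt (hp : IsMonicOrthogonal L p) {k : ℕ} {q : K[X]}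
    (hq : q.degree < k) : L (p k * q) = 0 := by
  have hgen : p '' Set.Iio k ⊆ LinearMap.ker (L ∘ₗ LinearMap.mulLeft K (p k)) := by
    rintro _ ⟨m, hm, rfl⟩
    exact hp.orthogonal k m (ne_of_gt hm)
  exact Submodule.span_le.mpr hgen (hp.mem_span_image_Iio hq)

lemma map_mul_eq_zero_of_natDegree_lt (hp : IsMonicOrthogonal L p) {k : ℕ} {q : K[X]}
    (hq : q.natDegree < k) : L (p k * q) = 0 :=
  hp.map_mul_eq_zero_of_degree_lt ((degree_le_natDegree).trans_lt (by exact_mod_cast hq))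

lemma map_mul_eq_of_monic (hp : IsMonicOrthogonal L p) {k : ℕ} {q : K[X]} (hq : q.Monic)
    (hqk : q.natDegree = k) : L (p k * q) = L (p k * p k) := by
  have hpk := hp.monic k
  have hlow : (q - p k).degree < k := by
    have := degree_sub_lt_left (p := q) (q := p k)
      (by rw [degree_eq_natDegree hq.ne_zero, degree_eq_natDegree hpk.ne_zero, hqk,
        hp.natDegree_eq]) hq.ne_zero (by rw [hq.leadingCoeff, hpk.leadingCoeff])
    rwa [degree_eq_natDegree hq.ne_zero, hqk] at this
  rw [← sub_eq_zero, ← map_sub, ← mul_sub]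
  exact hp.map_mul_eq_zero_of_degree_lt hlow

lemma eq_sum_smul (hp : IsMonicOrthogonal L p) (hnorm : ∀ k, L (p k * p k) ≠ 0) {q : K[X]}
    {N : ℕ} (hq : q.degree < N) :
    q = ∑ m ∈ Finset.range N, (L (q * p m) / L (p m * p m)) • p m := by
  let Φ : K[X] →ₗ[K] K[X] := ∑ m ∈ Finset.range N,
    ((L (p m * p m))⁻¹ • (L ∘ₗ LinearMap.mulRight K (p m))).smulRight (p m : K[X])
  have hΦ : ∀ f, Φ f = ∑ m ∈ Finset.range N, (L (f * p m) / L (p m * p m)) • p m := by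
    intro f
    simp [Φ, div_eq_inv_mul]
  have hbasis : Set.EqOn Φ (LinearMap.id (R := K)) (p '' Set.Iio N) := by
    rintro _ ⟨k, hk, rfl⟩
    rw [hΦ, Finset.sum_eq_single k, div_self (hnorm k), one_smul, LinearMap.id_apply]
    · intro m _ hmk
      rw [hp.orthogonal k m hmk.symm, zero_div, zero_smul]
    · exact fun hk' => absurd (Finset.mem_range.mpr hk) hk'
  rw [← hΦ]
  exact (LinearMap.eqOn_span' hbasis (hp.mem_span_image_Iio hq)).symm

lemma map_truncCross_mul (hp : IsMonicOrthogonal L p) {n j m : ℕ} (hj : j < n)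
    (hm : m ≤ n - 1 - j) :
    L (truncCross p n j * p m) = if m = n - 1 - j then L (p (n - 1) * p (n - 1)) else 0 := by
  have htrunc : ∀ k, k ≤ n → (p k /ₘ X ^ (n - j) * p m).natDegree ≤ j + m := by
    intro k hk
    refine natDegree_mul_le.trans ?_
    rw [natDegree_divByMonic _ (monic_X_pow _), natDegree_X_pow, hp.natDegree_eq, hp.natDegree_eq]
    omega
  have hsplit : truncCross p n j * p m
      = p (n - 1) * (p n /ₘ X ^ (n - j) * p m) - p n * (p (n - 1) /ₘ X ^ (n - j) * p m) := by
    rw [truncCross]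
    ring
  rw [hsplit, map_sub,
    hp.map_mul_eq_zero_of_natDegree_lt ((htrunc _ (Nat.sub_le n 1)).trans_lt (by omega)), sub_zero]
  split_ifs with htop
  · have hTmonic : (p n /ₘ X ^ (n - j)).Monic :=
      (hp.monic n).divByMonic_X_pow (by rw [hp.natDegree_eq]; omega)
    have hmonic := hTmonic.mul (hp.monic m)
    refine hp.map_mul_eq_of_monic hmonic ?_
    rw [hTmonic.natDegree_mul (hp.monic m), natDegree_divByMonic _ (monic_X_pow _),
      natDegree_X_pow, hp.natDegree_eq, hp.natDegree_eq]
    omega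
  · exact hp.map_mul_eq_zero_of_natDegree_lt ((htrunc n le_rfl).trans_lt (by omega))

lemma exists_blockTriangular_truncCross_eq_sum (hp : IsMonicOrthogonal L p)
    (hnorm : ∀ k, L (p k * p k) ≠ 0) {n r : ℕ} (hnr : r ≤ n) :
    ∃ A : Matrix (Fin r) (Fin r) K, A.BlockTriangular id ∧
      (∀ i : Fin r, A i i = L (p (n - 1) * p (n - 1)) / L (p (n - r + i) * p (n - r + i))) ∧
      ∀ i : Fin r, truncCross p n (r - 1 - i) = ∑ m : Fin r, A i m • p (n - r + m) := by
  let c : ℕ → ℕ → K := fun j m => L (truncCross p n j * p m) / L (p m * p m)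
  have hc : ∀ j m, j < n → m ≤ n - 1 - j →
      c j m = if m = n - 1 - j then L (p (n - 1) * p (n - 1)) / L (p m * p m) else 0 := by
    intro j m hj hm
    simp only [c, hp.map_truncCross_mul hj hm, ite_div, zero_div]
  refine ⟨of fun i m => c (r - 1 - i) (n - r + m), fun i m (hmi : m < i) => ?_, fun i => ?_,
    fun i => ?_⟩
  · rw [of_apply, hc _ _ (by omega) (by omega), if_neg (by omega)]
  · rw [of_apply, hc _ _ (by omega) (by omega), if_pos (by omega)]
  · have hdeg : (truncCross p n (r - 1 - i)).degree < n :=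
      degree_divByMonic_X_pow_mul_sub_lt (hp.natDegree_eq n).le
        ((hp.natDegree_eq _).trans_le (Nat.sub_le n 1)) (Nat.sub_le _ _)
    have hsplit := Finset.sum_range_add (fun m => c (r - 1 - i) m • p m) (n - r) r
    rw [Nat.sub_add_cancel hnr] at hsplit
    conv_lhs => rw [hp.eq_sum_smul hnorm hdeg]
    rw [hsplit, Finset.sum_eq_zero, zero_add, ← Fin.sum_univ_eq_sum_range]
    · rfl
    intro m hm
    rw [Finset.mem_range] at hm
    rw [hc _ _ (by omega) (by omega), if_neg (by omega), zero_smul]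

end IsMonicOrthogonal

end Orthogonal

lemma Ptrunc_eq_mul_aeval_divByMonic {b : ℕ → ℂ} {a : ℂ} {q : ℝ[X]} {n j : ℕ}
    (hq : q.natDegree ≤ n) (hjn : j ≤ n) (hb : ∀ m ≤ n, b m = a * q.coeff (n - m)) (z : ℂ) :
    Ptrunc b j z = a * aeval z (q /ₘ X ^ (n - j)) := by
  have hdeg : (q /ₘ X ^ (n - j)).natDegree < j + 1 := by
    rw [natDegree_divByMonic _ (monic_X_pow _), natDegree_X_pow]
    omega
  rw [Ptrunc, aeval_eq_sum_range' hdeg, Finset.mul_sum, ← Finset.sum_range_reflect]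
  refine Finset.sum_congr rfl fun m hm => ?_
  rw [Finset.mem_range] at hm
  rw [hb _ (by omega), coeff_divByMonic_X_pow, Complex.real_smul, mul_assoc,
    show n - (j + 1 - 1 - m) = m + (n - j) by omega, show j - (j + 1 - 1 - m) = m by omega]

lemma sum_Emat_mul_xcol {n r : ℕ} (hnr : r ≤ n) {p : ℕ → ℝ[X]}
    (hdeg : ∀ k, (p k).natDegree ≤ k) (κ : ℕ → ℝ) (z : ℂ) (i : Fin r) :
    ∑ k : Fin 2, Emat n r p κ z i k * xcol n p κ z k
      = -(2 * Real.pi * Complex.I) * ((κ (n - 1) : ℝ) : ℂ) ^ 2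
          * aeval z (truncCross p n (r - 1 - i)) := by
  have hj : r - 1 - (i : ℕ) ≤ n := by omega
  rw [Fin.sum_univ_two]
  simp only [Emat, xcol, of_apply, Matrix.cons_val_zero, Matrix.cons_val_one]
  rw [Ptrunc_eq_mul_aeval_divByMonic (a := -(2 * Real.pi * Complex.I) * ((κ (n - 1) : ℝ) : ℂ) ^ 2)
      ((hdeg _).trans (Nat.sub_le n 1)) hj (fun m hm => by simp [ccoef, hm]),
    Ptrunc_eq_mul_aeval_divByMonic (a := 1) (hdeg n) hj (fun m hm => by simp [bcoef, hm]),
    truncCross, map_sub, map_mul, map_mul]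
  ring

lemma integrable_eval_mul_of_integrable_abs_pow_mul {w : ℝ → ℝ} (hw : AEStronglyMeasurable w)
    (hw0 : ∀ x, 0 ≤ w x) (hmom : ∀ k : ℕ, Integrable fun x => |x| ^ k * w x) (q : ℝ[X]) :
    Integrable fun x => q.eval x * w x := by
  induction q using Polynomial.induction_on' with
  | add f g hf hg =>
    simp only [eval_add, add_mul]
    exact hf.add hg
  | monomial k a =>
    have hmono : Integrable fun x => x ^ k * w x :=
      (hmom k).mono' ((continuous_pow k).aestronglyMeasurable.mul hw)
        (ae_of_all _ fun x => by rw [norm_mul, norm_pow, Real.norm_eq_abs, Real.norm_eq_abs,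
          abs_of_nonneg (hw0 x)])
    simpa only [eval_monomial, mul_assoc] using hmono.const_mul a

def weightedMoment (w : ℝ → ℝ) (hw : ∀ q : ℝ[X], Integrable fun x => q.eval x * w x) :
    ℝ[X] →ₗ[ℝ] ℝ where
  toFun q := ∫ x, q.eval x * w x
  map_add' f g := by simp only [eval_add, add_mul]; exact integral_add (hw f) (hw g)
  map_smul' a f := by
    simp only [eval_smul, smul_eq_mul, mul_assoc, RingHom.id_apply]
    exact integral_const_mul a _

lemma weightedMoment_mul (w : ℝ → ℝ) (hw : ∀ q : ℝ[X], Integrable fun x => q.eval x * w x)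
    (f g : ℝ[X]) : weightedMoment w hw (f * g) = ∫ x, f.eval x * g.eval x * w x := by
  simp [weightedMoment]

theorem exists_triangular_S_general
    (n r : ℕ) (hnr : r ≤ n)
    (V : ℝ → ℝ) (hV : Continuous V)
    (hVint : ∀ k : ℕ, MeasureTheory.Integrable (fun x : ℝ => |x| ^ k * Real.exp (-V x)))
    (p : ℕ → Polynomial ℝ)
    (hmonic : ∀ k, (p k).Monic)
    (hdeg : ∀ k, (p k).natDegree = k)
    (horth : ∀ k m, k ≠ m → ∫ x : ℝ, (p k).eval x * (p m).eval x * Real.exp (-V x) = 0)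
    (κ : ℕ → ℝ) (hκpos : ∀ k, 0 < κ k)
    (hκ : ∀ k, ∫ x : ℝ, ((p k).eval x) ^ 2 * Real.exp (-V x) = ((κ k) ^ 2)⁻¹)
 :
    ∃ S : Matrix (Fin r) (Fin r) ℂ,
      S.BlockTriangular id ∧
      (∀ i : Fin r, S i i = (((κ (n - r + (i : ℕ))) ^ 2 : ℝ) : ℂ)) ∧
      (∀ z : ℂ, ∀ i : Fin r,
        ∑ k : Fin 2, Emat n r p κ z i k * xcol n p κ z k
          = -(2 * Real.pi * Complex.I) * ∑ m : Fin r, S i m * tvecC n r p z m) ∧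
      IsUnit S := by
  have hw := integrable_eval_mul_of_integrable_abs_pow_mul
    (by fun_prop : Continuous fun x => Real.exp (-V x)).aestronglyMeasurable
    (fun x => (Real.exp_pos _).le) hVint
  set L := weightedMoment _ hw
  have hp : IsMonicOrthogonal L p :=
    ⟨hmonic, hdeg, fun k m hkm => (weightedMoment_mul _ hw _ _).trans (horth k m hkm)⟩
  have hnorm : ∀ k, L (p k * p k) = (κ k ^ 2)⁻¹ := fun k => by
    rw [weightedMoment_mul, ← hκ k]
    simp only [sq]
  obtain ⟨A, hAtri, hAdiag, hAexp⟩ := hp.exists_blockTriangular_truncCross_eq_sum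
    (fun k => by simp [hnorm, (hκpos k).ne']) hnr
  let S : Matrix (Fin r) (Fin r) ℂ := of fun i m => ((κ (n - 1) ^ 2 * A i m : ℝ) : ℂ)
  have hStri : S.BlockTriangular id := fun i m h => by simp [S, hAtri h]
  have hSdiag : ∀ i : Fin r, S i i = ((κ (n - r + i) ^ 2 : ℝ) : ℂ) := fun i => by
    simp only [S, of_apply, hAdiag, hnorm]
    field_simp [(hκpos (n - 1)).ne']
  refine ⟨S, hStri, hSdiag, fun z i => ?_, ?_⟩
  · rw [sum_Emat_mul_xcol hnr (fun k => (hdeg k).le), hAexp i, map_sum, Finset.mul_sum,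
      Finset.mul_sum]
    refine Finset.sum_congr rfl fun m _ => ?_
    simp only [S, tvecC, of_apply, Algebra.smul_def, algebraMap_eq, map_mul, aeval_C,
      Complex.coe_algebraMap, Complex.ofReal_mul, Complex.ofReal_pow]
    ring
  · rw [isUnit_iff_isUnit_det, det_of_isUpperTriangular hStri, isUnit_iff_ne_zero,
      Finset.prod_ne_zero_iff]
    exact fun i _ => by rw [hSdiag]; exact_mod_cast (pow_pos (hκpos _) 2).ne'

/-- There exists an upper triangular `r×r` matrix `S` with diagonal entries
`κ_{n-r}², ..., κ_{n-1}²` such that `E(z) x(z) = −2πi · S · t(z)` for all `z`;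
in particular `S` is invertible. -/
theorem exists_triangular_S
    (n r : ℕ) (hr : 1 ≤ r) (hnr : r ≤ n)
    (V : ℝ → ℝ) (hV : Continuous V)
    (hVint : ∀ k : ℕ, MeasureTheory.Integrable (fun x : ℝ => |x| ^ k * Real.exp (-V x)))
    (p : ℕ → Polynomial ℝ)
    (hmonic : ∀ k, (p k).Monic)
    (hdeg : ∀ k, (p k).natDegree = k)
    (horth : ∀ k m, k ≠ m → ∫ x : ℝ, (p k).eval x * (p m).eval x * Real.exp (-V x) = 0)
    (κ : ℕ → ℝ) (hκpos : ∀ k, 0 < κ k)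
    (hκ : ∀ k, ∫ x : ℝ, ((p k).eval x) ^ 2 * Real.exp (-V x) = ((κ k) ^ 2)⁻¹)
 :
    ∃ S : Matrix (Fin r) (Fin r) ℂ,
      S.BlockTriangular id ∧
      (∀ i : Fin r, S i i = (((κ (n - r + (i : ℕ))) ^ 2 : ℝ) : ℂ)) ∧
      (∀ z : ℂ, ∀ i : Fin r,
        ∑ k : Fin 2, Emat n r p κ z i k * xcol n p κ z k
          = -(2 * Real.pi * Complex.I) * ∑ m : Fin r, S i m * tvecC n r p z m) ∧
      IsUnit S :=
  exists_triangular_S_general n r hnr V hV hVint p hmonic hdeg horth κ hκpos hκ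

end
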